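/- arXiv:1208.1971 — 5 statements merged into one kernel-verified Lean document; each statement's English description precedes it below -/
import Mathlib

section
/- Let R be the 3×3 rotationally symmetric matrix with parameters r1, r2. Then R is completely-S if and only if 1 + r1 + r2 > 0. -/
open Matrix

/-- `R` is completely-S: every principal submatrix (indexed by a nonempty
subset `s` of indices) admits a componentwise-positive vector `u` (on `s`)
whose image under the submatrix is componentwise positive. -/
def CompletelyS {n : ℕ} (R : Matrix (Fin n) (Fin n) ℝ) : Prop :=
  ∀ s : Finset (Fin n), s.Nonempty →
    ∃ u : Fin n → ℝ, (∀ i ∈ s, 0 < u i) ∧ (∀ i ∈ s, 0 < ∑ j ∈ s, R i j * u j)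

lemma key2 (p q : ℝ) (h : -1 < p + q) :
    0 < (1 - min p 0) + p * (1 - min q 0) := by
  rcases le_or_gt 0 p with hp | hp
  · rw [min_eq_right hp]
    have hq : min q 0 ≤ 0 := min_le_right q 0
    nlinarith [mul_nonneg hp (by linarith : (0:ℝ) ≤ 1 - min q 0)]
  · rw [min_eq_left hp.le]
    rcases le_or_gt 0 q with hq | hq
    · rw [min_eq_right hq]; ring_nf; nlinarith
    · rw [min_eq_left hq.le]; nlinarith

lemma pos2 (x : ℝ) : 0 < 1 - min x 0 := by
  have := min_le_right x (0:ℝ); linarith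

theorem stmt_1 (r1 r2 : ℝ)
    (R : Matrix (Fin 3) (Fin 3) ℝ)
    (hR : R = !![1, r2, r1; r1, 1, r2; r2, r1, 1]) :
    CompletelyS R ↔ 1 + r1 + r2 > 0 := by
  subst hR
  constructor
  · intro h
    obtain ⟨u, hu, hs⟩ := h Finset.univ ⟨0, Finset.mem_univ 0⟩
    have h0 := hs 0 (Finset.mem_univ _)
    have h1 := hs 1 (Finset.mem_univ _)
    have h2 := hs 2 (Finset.mem_univ _)
    have u0 := hu 0 (Finset.mem_univ _)
    have u1 := hu 1 (Finset.mem_univ _)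
    have u2 := hu 2 (Finset.mem_univ _)
    simp [Fin.sum_univ_three] at h0 h1 h2
    by_contra hc
    push_neg at hc
    nlinarith [mul_nonpos_of_nonpos_of_nonneg (by linarith : 1 + r1 + r2 ≤ 0)
      (by linarith : (0:ℝ) ≤ u 0 + u 1 + u 2)]
  · intro h s hs
    have hh : -1 < r1 + r2 := by linarith
    have hh' : -1 < r2 + r1 := by linarith
    fin_cases s
    · exact absurd hs (by simp)
    · exact ⟨![1, 0, 0], by intro i hi; fin_cases hi <;> norm_num,
        by intro i hi; fin_cases hi <;> norm_num⟩
    · exact ⟨![0, 1, 0], by intro i hi; fin_cases hi <;> norm_num,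
        by intro i hi; fin_cases hi <;> norm_num⟩
    · exact ⟨![1 - min r2 0, 1 - min r1 0, 0],
        by intro i hi; fin_cases hi <;> simpa using pos2 _,
        by intro i hi; fin_cases hi <;> simp <;>
          [exact key2 r2 r1 hh'; (have := key2 r1 r2 hh; nlinarith)]⟩
    · exact ⟨![0, 0, 1], by intro i hi; fin_cases hi <;> norm_num,
        by intro i hi; fin_cases hi <;> norm_num⟩
    · exact ⟨![1 - min r1 0, 0, 1 - min r2 0],
        by intro i hi; fin_cases hi <;> simpa using pos2 _,
        by intro i hi; fin_cases hi <;> simp <;>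
          [exact key2 r1 r2 hh; (have := key2 r2 r1 hh'; nlinarith)]⟩
    · exact ⟨![0, 1 - min r2 0, 1 - min r1 0],
        by intro i hi; fin_cases hi <;> simpa using pos2 _,
        by intro i hi; fin_cases hi <;> simp <;>
          [exact key2 r2 r1 hh'; (have := key2 r1 r2 hh; nlinarith)]⟩
    · exact ⟨![1, 1, 1], by intro i hi; fin_cases hi <;> norm_num,
        by intro i hi; fin_cases hi <;> simp [Fin.sum_univ_three] <;> linarith⟩
end

section
/- Let R be the 3×3 rotationally symmetric matrix with parameters r1, r2 satisfying r1 + r2 < 2. Then R is completely-S (equivalently, 1 + r1 + r2 > 0) if and only if R is a P-matrix (equivalently, 1 - r1·r2 > 0 and 1 + r1³ + r2³ - 3·r1·r2 > 0). -/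
/-!
Both properties reduce to `0 < 1 + r1 + r2`. Every row and column of `R` sums to `1 + r1 + r2`,
so summing the inequalities `R u > 0` forces it to be positive, and conversely it makes the
all-ones vector a witness on the full index set; the two-element index sets are S-matrices as soon
as `1 + r1 + r2 > 0`. On the other side, `det R = (1 + r1 + r2) * q` with `q > 0` off
`r1 = r2 = 1`, and `1 - r1 r2 > 0` follows from `4 r1 r2 ≤ (r1 + r2)² < 4`.
-/

open Matrix

/-- `R` is a P-matrix: every principal minor is positive. -/
def IsPMatrix {n : ℕ} (R : Matrix (Fin n) (Fin n) ℝ) : Prop :=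
  ∀ s : Finset (Fin n), s.Nonempty →
    0 < (R.submatrix (fun i : s => (i : Fin n)) (fun j : s => (j : Fin n))).det

section PrincipalMinors

variable {n R : Type*} [DecidableEq n] [CommRing R]

def finTwoEquivPair {i j : n} (hij : i ≠ j) : Fin 2 ≃ ({i, j} : Finset n) where
  toFun := ![⟨i, by simp⟩, ⟨j, by simp⟩]
  invFun k := if (k : n) = i then 0 else 1
  left_inv k := by fin_cases k <;> simp [hij.symm]
  right_inv := by
    rintro ⟨k, hk⟩
    rcases Finset.mem_insert.1 hk with rfl | hk
    · simp
    · obtain rfl := Finset.mem_singleton.1 hk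
      simp [hij.symm]

theorem det_submatrix_singleton (M : Matrix n n R) (i : n) :
    (M.submatrix (fun k : ({i} : Finset n) => (k : n))
      (fun k : ({i} : Finset n) => (k : n))).det = M i i :=
  det_unique _

theorem det_submatrix_pair (M : Matrix n n R) {i j : n} (hij : i ≠ j) :
    (M.submatrix (fun k : ({i, j} : Finset n) => (k : n))
      (fun k : ({i, j} : Finset n) => (k : n))).det = M i i * M j j - M i j * M j i := by
  rw [← det_submatrix_equiv_self (finTwoEquivPair hij), det_fin_two]
  rfl

theorem det_submatrix_univ [Fintype n] (M : Matrix n n R) :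
    (M.submatrix (fun k : (Finset.univ : Finset n) => (k : n))
      (fun k : (Finset.univ : Finset n) => (k : n))).det = M.det :=
  det_submatrix_equiv_self (Equiv.subtypeUnivEquiv Finset.mem_univ) M

end PrincipalMinors

section SMatrix

variable {n : Type*}

def IsSMatrixOn (M : Matrix n n ℝ) (s : Finset n) : Prop :=
  ∃ u : n → ℝ, (∀ i ∈ s, 0 < u i) ∧ ∀ i ∈ s, 0 < ∑ j ∈ s, M i j * u j

theorem completelyS_iff {m : ℕ} (M : Matrix (Fin m) (Fin m) ℝ) :
    CompletelyS M ↔ ∀ s : Finset (Fin m), s.Nonempty → IsSMatrixOn M s :=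
  Iff.rfl

theorem isSMatrixOn_of_rowSum_pos {M : Matrix n n ℝ} {s : Finset n}
    (h : ∀ i ∈ s, 0 < ∑ j ∈ s, M i j) : IsSMatrixOn M s :=
  ⟨fun _ => 1, fun _ _ => one_pos, by simpa using h⟩

theorem exists_pos_two_by_two {a b : ℝ} (h : 0 < 1 + a + b) :
    ∃ x y : ℝ, 0 < x ∧ 0 < y ∧ 0 < x + a * y ∧ 0 < b * x + y := by
  rcases le_or_gt 0 b with hb | hb
  · exact ⟨1 + |a|, 1, by positivity, one_pos, by linarith [neg_abs_le a],
      by nlinarith [abs_nonneg a]⟩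
  rcases le_or_gt 0 a with ha | ha
  · exact ⟨1, 1 + |b|, one_pos, by positivity, by nlinarith [abs_nonneg b],
      by linarith [neg_abs_le b]⟩
  · exact ⟨1, 1, one_pos, one_pos, by linarith, by linarith⟩

theorem isSMatrixOn_pair [DecidableEq n] {M : Matrix n n ℝ} {i j : n} (hij : i ≠ j)
    (hi : M i i = 1) (hj : M j j = 1) (h : 0 < 1 + M i j + M j i) : IsSMatrixOn M {i, j} := by
  obtain ⟨x, y, hx, hy, hrow_i, hrow_j⟩ := exists_pos_two_by_two h
  refine ⟨fun k => if k = i then x else y, ?_, ?_⟩ <;>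
    simp [Finset.sum_pair hij, hij.symm, hi, hj, hx, hy, hrow_i, hrow_j]

theorem pos_of_isSMatrixOn_univ [Fintype n] [Nonempty n] {M : Matrix n n ℝ} {c : ℝ}
    (hc : ∀ j, ∑ i, M i j = c) (hM : IsSMatrixOn M Finset.univ) : 0 < c := by
  obtain ⟨u, hu, hMu⟩ := hM
  have hsum : ∑ i, ∑ j, M i j * u j = c * ∑ j, u j := by
    rw [Finset.sum_comm, Finset.mul_sum]
    simp only [← Finset.sum_mul, hc]
  have hpos : 0 < ∑ i, ∑ j, M i j * u j :=
    Finset.sum_pos (fun i _ => hMu i (Finset.mem_univ i)) Finset.univ_nonempty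
  exact pos_of_mul_pos_left (hsum ▸ hpos)
    (Finset.sum_nonneg fun j _ => (hu j (Finset.mem_univ j)).le)

end SMatrix

theorem Fin.three_finset_cases : ∀ s : Finset (Fin 3), s.Nonempty →
    s = {0} ∨ s = {1} ∨ s = {2} ∨ s = {0, 1} ∨ s = {0, 2} ∨ s = {1, 2} ∨
      s = Finset.univ := by
  decide

section RotationallySymmetric

def rotSymm (r1 r2 : ℝ) : Matrix (Fin 3) (Fin 3) ℝ :=
  !![1, r2, r1; r1, 1, r2; r2, r1, 1]

variable {r1 r2 : ℝ}

theorem det_rotSymm : (rotSymm r1 r2).det =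
    (1 + r1 + r2) * (1 + r1 ^ 2 + r2 ^ 2 - r1 - r2 - r1 * r2) := by
  simp [rotSymm, det_fin_three]
  ring

/-- Twice the quadratic factor is `(1 - r1)² + (1 - r2)² + (r1 - r2)²`, which vanishes only at
`r1 = r2 = 1`. -/
theorem quadratic_factor_pos (h : r1 + r2 < 2) :
    0 < 1 + r1 ^ 2 + r2 ^ 2 - r1 - r2 - r1 * r2 := by
  nlinarith [sq_nonneg (2 - r1 - r2), sq_nonneg (r1 - r2)]

theorem det_rotSymm_pos_iff (h : r1 + r2 < 2) : 0 < (rotSymm r1 r2).det ↔ 0 < 1 + r1 + r2 := by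
  rw [det_rotSymm, mul_pos_iff_of_pos_right (quadratic_factor_pos h)]

theorem one_sub_mul_pos (hs : 0 < 1 + r1 + r2) (h : r1 + r2 < 2) : 0 < 1 - r1 * r2 := by
  nlinarith [sq_nonneg (r1 - r2)]

theorem isPMatrix_rotSymm_iff (h : r1 + r2 < 2) :
    IsPMatrix (rotSymm r1 r2) ↔ 0 < 1 + r1 + r2 := by
  refine ⟨fun hP => ?_, fun hs s hne => ?_⟩
  · simpa [det_submatrix_univ, det_rotSymm_pos_iff h] using hP Finset.univ Finset.univ_nonempty
  have hpair := one_sub_mul_pos hs h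
  rcases Fin.three_finset_cases s hne with rfl | rfl | rfl | rfl | rfl | rfl | rfl
  iterate 3 (rw [det_submatrix_singleton]; simp [rotSymm])
  iterate 3 (rw [det_submatrix_pair _ (by decide)]; simp [rotSymm]; linarith [mul_comm r1 r2])
  rwa [det_submatrix_univ, det_rotSymm_pos_iff h]

theorem completelyS_rotSymm_iff : CompletelyS (rotSymm r1 r2) ↔ 0 < 1 + r1 + r2 := by
  rw [completelyS_iff]
  refine ⟨fun hS => ?_, fun hs s hne => ?_⟩
  · refine pos_of_isSMatrixOn_univ (fun j => ?_) (hS Finset.univ Finset.univ_nonempty)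
    fin_cases j <;> simp [rotSymm, Fin.sum_univ_three] <;> ring
  rcases Fin.three_finset_cases s hne with rfl | rfl | rfl | rfl | rfl | rfl | rfl
  · exact isSMatrixOn_of_rowSum_pos (by simp [rotSymm])
  · exact isSMatrixOn_of_rowSum_pos (by simp [rotSymm])
  · exact isSMatrixOn_of_rowSum_pos (by simp [rotSymm])
  · exact isSMatrixOn_pair (by decide) rfl rfl (by simp [rotSymm]; linarith)
  · exact isSMatrixOn_pair (by decide) rfl rfl (by simp [rotSymm]; linarith)
  · exact isSMatrixOn_pair (by decide) rfl rfl (by simp [rotSymm]; linarith)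
  · refine isSMatrixOn_of_rowSum_pos fun i _ => ?_
    fin_cases i <;> simp [rotSymm, Fin.sum_univ_three] <;> linarith

end RotationallySymmetric

theorem stmt_3 (r1 r2 : ℝ)
    (R : Matrix (Fin 3) (Fin 3) ℝ)
    (hR : R = !![1, r2, r1; r1, 1, r2; r2, r1, 1])
    (hstab : r1 + r2 < 2) :
    CompletelyS R ↔ IsPMatrix R := by
  subst hR
  exact completelyS_rotSymm_iff.trans (isPMatrix_rotSymm_iff hstab).symm
end

section
/- Let θ0 < 0, r1 ≤ 1, r2 ≤ 1 with (r1, r2) ≠ (1, 1), and let R be the rotationally symmetric reflection matrix with parameters r1, r2 and θ = (θ0, θ0, θ0). Then every solution (u, v) of the linear complementarity problem (u ≥ 0, v ≥ 0, v = θ + Ru, uᵀv = 0) satisfies v = 0; i.e., there are no divergent solutions. -/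
open Matrix

private lemma aux_two (r1 r2 θ0 b c : ℝ) (hθ : θ0 < 0) (h1 : r1 ≤ 1) (h2 : r2 ≤ 1)
    (hne : ¬(r1 = 1 ∧ r2 = 1)) (hb : 0 ≤ b) (hc : 0 ≤ c)
    (E1 : θ0 + b + r2 * c = 0) (E2 : θ0 + r1 * b + c = 0)
    (hv : 0 ≤ θ0 + r2 * b + r1 * c) : False := by
  have hbd : b * (1 - r1 * r2) = -θ0 * (1 - r2) := by linear_combination E1 - r2 * E2
  have hcd : c * (1 - r1 * r2) = -θ0 * (1 - r1) := by linear_combination E2 - r1 * E1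
  rcases lt_trichotomy (1 - r1 * r2) 0 with hd | hd | hd
  · have h2' : (1 : ℝ) ≤ r2 := by
      nlinarith [mul_nonneg hb (by linarith : (0:ℝ) ≤ r1 * r2 - 1)]
    have h2'' : r2 = 1 := le_antisymm h2 h2'
    rw [h2''] at hd; linarith
  · rw [hd, mul_zero] at hbd
    have h0 : (1 - r2) = 0 := by
      rcases mul_eq_zero.mp hbd.symm with h | h
      · exfalso; linarith
      · exact h
    have h2' : r2 = 1 := by linarith
    have h1' : r1 = 1 := by rw [h2'] at hd; linarith
    exact hne ⟨h1', h2'⟩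
  · have hEpos : 0 < (1 - r1) * (1 - r2) + (r1 - r2) ^ 2 := by
      rcases not_and_or.mp hne with h | h
      · have hr1 : r1 < 1 := lt_of_le_of_ne h1 h
        nlinarith [sq_nonneg (2*r2 - r1 - 1)]
      · have hr2 : r2 < 1 := lt_of_le_of_ne h2 h
        nlinarith [sq_nonneg (2*r1 - r2 - 1)]
    have hkey : (θ0 + r2 * b + r1 * c) * (1 - r1 * r2)
        = θ0 * ((1 - r1) * (1 - r2) + (r1 - r2) ^ 2) := by
      linear_combination r2 * hbd + r1 * hcd
    have hge : 0 ≤ (θ0 + r2 * b + r1 * c) * (1 - r1 * r2) := mul_nonneg hv hd.le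
    have hlt : θ0 * ((1 - r1) * (1 - r2) + (r1 - r2) ^ 2) < 0 :=
      mul_neg_of_neg_of_pos hθ hEpos
    rw [hkey] at hge; linarith

theorem stmt_8 (r1 r2 θ0 : ℝ) (hθ : θ0 < 0)
    (h1 : r1 ≤ 1) (h2 : r2 ≤ 1) (hne : (r1, r2) ≠ (1, 1))
    (R : Matrix (Fin 3) (Fin 3) ℝ)
    (hR : R = !![1, r2, r1; r1, 1, r2; r2, r1, 1])
    (θ : Fin 3 → ℝ) (hθv : θ = ![θ0, θ0, θ0]) :
    ∀ u v : Fin 3 → ℝ,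
      (∀ i, 0 ≤ u i) → (∀ i, 0 ≤ v i) → v = θ + R.mulVec u →
      u ⬝ᵥ v = 0 → v = 0 := by
  subst hR hθv
  intro u v hu hv hveq hdot
  have hne' : ¬(r1 = 1 ∧ r2 = 1) := by
    intro ⟨ha, hb⟩; exact hne (by rw [ha, hb])
  have hV0 := congrFun hveq 0
  have hV1 := congrFun hveq 1
  have hV2 := congrFun hveq 2
  simp [Matrix.mulVec, dotProduct, Fin.sum_univ_three] at hV0 hV1 hV2
  simp [dotProduct, Fin.sum_univ_three] at hdot
  have m0 : u 0 * v 0 = 0 := by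
    nlinarith [mul_nonneg (hu 0) (hv 0), mul_nonneg (hu 1) (hv 1), mul_nonneg (hu 2) (hv 2)]
  have m1 : u 1 * v 1 = 0 := by
    nlinarith [mul_nonneg (hu 0) (hv 0), mul_nonneg (hu 1) (hv 1), mul_nonneg (hu 2) (hv 2)]
  have m2 : u 2 * v 2 = 0 := by
    nlinarith [mul_nonneg (hu 0) (hv 0), mul_nonneg (hu 1) (hv 1), mul_nonneg (hu 2) (hv 2)]
  have key : v 0 = 0 ∧ v 1 = 0 ∧ v 2 = 0 := by
    rcases mul_eq_zero.mp m0 with hu0 | hv0 <;>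
      rcases mul_eq_zero.mp m1 with hu1 | hv1 <;>
        rcases mul_eq_zero.mp m2 with hu2 | hv2
    · -- u0 = u1 = u2 = 0 : v 0 = θ0 < 0, impossible
      exfalso
      have : v 0 = θ0 := by linear_combination hV0 + hu0 + r2 * hu1 + r1 * hu2
      linarith [hv 0]
    · -- u0 = u1 = 0, v2 = 0
      have hc : u 2 = -θ0 := by linear_combination hv2 - hV2 - r2 * hu0 - r1 * hu1
      have e0 : v 0 = θ0 - r1 * θ0 := by
        linear_combination hV0 + hu0 + r2 * hu1 + r1 * hc
      have e1 : v 1 = θ0 - r2 * θ0 := by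
        linear_combination hV1 + r1 * hu0 + hu1 + r2 * hc
      refine ⟨le_antisymm ?_ (hv 0), le_antisymm ?_ (hv 1), hv2⟩
      · nlinarith [mul_nonneg (by linarith : (0:ℝ) ≤ -θ0) (by linarith : (0:ℝ) ≤ 1 - r1)]
      · nlinarith [mul_nonneg (by linarith : (0:ℝ) ≤ -θ0) (by linarith : (0:ℝ) ≤ 1 - r2)]
    · -- u0 = u2 = 0, v1 = 0
      have hc : u 1 = -θ0 := by linear_combination hv1 - hV1 - r1 * hu0 - r2 * hu2
      have e0 : v 0 = θ0 - r2 * θ0 := by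
        linear_combination hV0 + hu0 + r2 * hc + r1 * hu2
      have e2 : v 2 = θ0 - r1 * θ0 := by
        linear_combination hV2 + r2 * hu0 + r1 * hc + hu2
      refine ⟨le_antisymm ?_ (hv 0), hv1, le_antisymm ?_ (hv 2)⟩
      · nlinarith [mul_nonneg (by linarith : (0:ℝ) ≤ -θ0) (by linarith : (0:ℝ) ≤ 1 - r2)]
      · nlinarith [mul_nonneg (by linarith : (0:ℝ) ≤ -θ0) (by linarith : (0:ℝ) ≤ 1 - r1)]
    · -- u0 = 0, v1 = v2 = 0 : two positive components case
      exfalso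
      refine aux_two r1 r2 θ0 (u 1) (u 2) hθ h1 h2 hne' (hu 1) (hu 2) ?_ ?_ ?_
      · linear_combination hv1 - hV1 - r1 * hu0
      · linear_combination hv2 - hV2 - r2 * hu0
      · calc (0:ℝ) ≤ v 0 := hv 0
          _ = θ0 + r2 * u 1 + r1 * u 2 := by linear_combination hV0 + hu0
    · -- v0 = 0, u1 = u2 = 0
      have hc : u 0 = -θ0 := by linear_combination hv0 - hV0 - r2 * hu1 - r1 * hu2
      have e1 : v 1 = θ0 - r1 * θ0 := by
        linear_combination hV1 + r1 * hc + hu1 + r2 * hu2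
      have e2 : v 2 = θ0 - r2 * θ0 := by
        linear_combination hV2 + r2 * hc + r1 * hu1 + hu2
      refine ⟨hv0, le_antisymm ?_ (hv 1), le_antisymm ?_ (hv 2)⟩
      · nlinarith [mul_nonneg (by linarith : (0:ℝ) ≤ -θ0) (by linarith : (0:ℝ) ≤ 1 - r1)]
      · nlinarith [mul_nonneg (by linarith : (0:ℝ) ≤ -θ0) (by linarith : (0:ℝ) ≤ 1 - r2)]
    · -- v0 = 0, u1 = 0, v2 = 0 : aux with b = u 2, c = u 0
      exfalso
      refine aux_two r1 r2 θ0 (u 2) (u 0) hθ h1 h2 hne' (hu 2) (hu 0) ?_ ?_ ?_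
      · linear_combination hv2 - hV2 - r1 * hu1
      · linear_combination hv0 - hV0 - r2 * hu1
      · calc (0:ℝ) ≤ v 1 := hv 1
          _ = θ0 + r2 * u 2 + r1 * u 0 := by linear_combination hV1 + hu1
    · -- v0 = v1 = 0, u2 = 0 : aux with b = u 0, c = u 1
      exfalso
      refine aux_two r1 r2 θ0 (u 0) (u 1) hθ h1 h2 hne' (hu 0) (hu 1) ?_ ?_ ?_
      · linear_combination hv0 - hV0 - r1 * hu2
      · linear_combination hv1 - hV1 - r2 * hu2
      · calc (0:ℝ) ≤ v 2 := hv 2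
          _ = θ0 + r2 * u 0 + r1 * u 1 := by linear_combination hV2 + hu2
    · exact ⟨hv0, hv1, hv2⟩
  funext i
  fin_cases i <;> simp [key.1, key.2.1, key.2.2]
end

section
/- Let θ = (θ0, θ0, θ0) with θ0 < 0, let Γ⁻¹ = σ⁻²·N where N has diagonal γ0 and off-diagonal γ1 with γ0 > γ1, and define the inner product ⟨v, w⟩ = vᵀΓ⁻¹w. Let v = (v₁, v₂, v₃) with v₃ ≥ v₂ ≥ v₁ > 0, and for a, b ≥ 0 define u¹ = (0, a, b) and u³ = (a, b, 0). Then ⟨v, u¹ - u³⟩ = σ⁻²·(γ0 - γ1)·[(v₃ - v₂)·b + (v₂ - v₁)·a] ≥ 0, and consequently ‖v - u³‖² ≥ ‖v - u¹‖² where ‖x‖² = ⟨x, x⟩. -/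
open Matrix

theorem stmt_15 (θ0 σ γ0 γ1 a b v1 v2 v3 : ℝ)
    (hθ : θ0 < 0) (hσ : 0 < σ) (hγ : γ0 > γ1)
    (hv : v3 ≥ v2 ∧ v2 ≥ v1 ∧ v1 > 0) (ha : 0 ≤ a) (hb : 0 ≤ b)
    (N : Matrix (Fin 3) (Fin 3) ℝ)
    (hN : N = !![γ0, γ1, γ1; γ1, γ0, γ1; γ1, γ1, γ0])
    (ip : (Fin 3 → ℝ) → (Fin 3 → ℝ) → ℝ)
    (hip : ∀ x y, ip x y = (σ ^ 2)⁻¹ * (x ⬝ᵥ N.mulVec y))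
    (v u1 u3 : Fin 3 → ℝ)
    (hvv : v = ![v1, v2, v3]) (hu1 : u1 = ![0, a, b]) (hu3 : u3 = ![a, b, 0]) :
    ip v (u1 - u3) =
        (σ ^ 2)⁻¹ * ((γ0 - γ1) * ((v3 - v2) * b + (v2 - v1) * a)) ∧
    0 ≤ ip v (u1 - u3) ∧
    ip (v - u1) (v - u1) ≤ ip (v - u3) (v - u3) := by
  obtain ⟨h32, h21, h1⟩ := hv
  have hσ2 : (0:ℝ) < (σ ^ 2)⁻¹ := by positivity
  subst hN hvv hu1 hu3
  simp only [hip, Matrix.mulVec, dotProduct, Fin.sum_univ_three,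
    Matrix.cons_val', Matrix.cons_val_zero, Matrix.cons_val_one, Matrix.head_cons,
    Matrix.empty_val', Matrix.cons_val_fin_one, Matrix.head_fin_const,
    Matrix.cons_val_two, Matrix.tail_cons, Pi.sub_apply,
    Matrix.of_apply]
  refine ⟨by ring, ?_, ?_⟩
  · have : (γ0 - γ1) * ((v3 - v2) * b + (v2 - v1) * a) ≥ 0 := by
      apply mul_nonneg (by linarith)
      have := mul_nonneg (sub_nonneg.2 h32) hb
      have := mul_nonneg (sub_nonneg.2 h21) ha
      linarith
    nlinarith
  · apply mul_le_mul_of_nonneg_left _ (le_of_lt hσ2)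
    nlinarith [mul_nonneg (sub_nonneg.2 h32) hb, mul_nonneg (sub_nonneg.2 h21) ha, mul_nonneg ha hb]
end

section
/- Let r1 ≥ 2/√3 and 0 ≤ r2 < 2 - r1, and suppose c ≥ 1 and d = √2 satisfy a = 1 + r1 + r2, b = 1 + r1² + r2². Then (a - √2·r2)² - b ≥ [1 + r1 - (√2-1)(2 - r1)]² - (1 + r1² + (2 - r1)²) = (6√2 - 4)·r1 - 12(√2 - 1), and this quantity is nonnegative when r1 ≥ 12(√2-1)/(6√2 - 4). Moreover 12(√2-1)/(6√2-4) < 2/√3. -/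
theorem stmt_19 (r1 r2 a b : ℝ)
    (hr1 : r1 ≥ 2 / Real.sqrt 3) (hr2 : 0 ≤ r2) (hr2' : r2 < 2 - r1)
    (ha : a = 1 + r1 + r2) (hb : b = 1 + r1 ^ 2 + r2 ^ 2) :
    (a - Real.sqrt 2 * r2) ^ 2 - b ≥
      (1 + r1 - (Real.sqrt 2 - 1) * (2 - r1)) ^ 2 -
        (1 + r1 ^ 2 + (2 - r1) ^ 2) ∧
    (1 + r1 - (Real.sqrt 2 - 1) * (2 - r1)) ^ 2 -
        (1 + r1 ^ 2 + (2 - r1) ^ 2) =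
      (6 * Real.sqrt 2 - 4) * r1 - 12 * (Real.sqrt 2 - 1) ∧
    (r1 ≥ 12 * (Real.sqrt 2 - 1) / (6 * Real.sqrt 2 - 4) →
      0 ≤ (6 * Real.sqrt 2 - 4) * r1 - 12 * (Real.sqrt 2 - 1)) ∧
    12 * (Real.sqrt 2 - 1) / (6 * Real.sqrt 2 - 4) < 2 / Real.sqrt 3 := by
  have hs2 : Real.sqrt 2 ^ 2 = 2 := Real.sq_sqrt (by norm_num)
  have hs1 : (1 : ℝ) < Real.sqrt 2 := by
    nlinarith [Real.sqrt_nonneg 2]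
  have hs15 : Real.sqrt 2 < 1.5 := by
    nlinarith [Real.sqrt_nonneg 2]
  have ht2 : Real.sqrt 3 ^ 2 = 3 := Real.sq_sqrt (by norm_num)
  have ht0 : (0 : ℝ) < Real.sqrt 3 := Real.sqrt_pos.mpr (by norm_num)
  have hr1pos : (0 : ℝ) < r1 := lt_of_lt_of_le (by positivity) hr1
  refine ⟨?_, ?_, ?_, ?_⟩
  · subst ha hb
    nlinarith [sq_nonneg (2 - r1 - r2), mul_nonneg (mul_nonneg hr2 (sub_nonneg.2 hs1.le)) (sub_nonneg.2 hr2'.le), mul_nonneg hr2 (sub_nonneg.2 hr2'.le), sq_nonneg (Real.sqrt 2 - 1)]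
  · linear_combination (r1 - 2) ^ 2 * hs2
  · intro h
    have h64 : (0 : ℝ) < 6 * Real.sqrt 2 - 4 := by linarith
    rw [ge_iff_le, div_le_iff₀ h64] at h
    linarith
  · rw [div_lt_div_iff₀ (by linarith) ht0]
    nlinarith [sq_nonneg (Real.sqrt 2 * Real.sqrt 3 - 2.449), sq_nonneg (Real.sqrt 2 - 1.414), sq_nonneg (Real.sqrt 3 - 1.732)]
end
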